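/- Let L ⊆ Q be a dense extension of Hom-Lie algebras such that Q is multiplicatively semiprime and Q is an algebra of quotients of L. Then for every essential Hom-ideal I of L, the extension I ⊆ Q is also dense. -/

import Mathlib

/-- A Hom-Lie algebra structure on a vector space `Q` over a field `𝔽`, with the
twisting map `α` additionally satisfying condition (2.1):
`α [x,y] = [α x, y] = [x, α y]`. -/
structure HomLieAlgebra (𝔽 : Type*) [Field 𝔽] (Q : Type*) [AddCommGroup Q] [Module 𝔽 Q] where
  bracket : Q →ₗ[𝔽] Q →ₗ[𝔽] Q
  alpha : Q →ₗ[𝔽] Q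
  skew : ∀ x y, bracket x y = - bracket y x
  jacobi : ∀ x y z, bracket (alpha x) (bracket y z) + bracket (alpha y) (bracket z x)
      + bracket (alpha z) (bracket x y) = 0
  comm₁ : ∀ x y, alpha (bracket x y) = bracket (alpha x) y
  comm₂ : ∀ x y, alpha (bracket x y) = bracket x (alpha y)

namespace HomLieAlgebra

variable {𝔽 : Type*} [Field 𝔽] {Q : Type*} [AddCommGroup Q] [Module 𝔽 Q]
variable (H : HomLieAlgebra 𝔽 Q)

/-- `S` is a Hom-subalgebra: a subspace closed under `α` and the bracket. -/
def IsSubalgebra (S : Submodule 𝔽 Q) : Prop :=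
  (∀ x ∈ S, H.alpha x ∈ S) ∧ ∀ x ∈ S, ∀ y ∈ S, H.bracket x y ∈ S

/-- `I` is a Hom-ideal of the Hom-subalgebra `L`:
a subspace `I ⊆ L` with `α(I) ⊆ I` and `[I, L] ⊆ I`. -/
def IsIdealOf (L I : Submodule 𝔽 Q) : Prop :=
  I ≤ L ∧ (∀ x ∈ I, H.alpha x ∈ I) ∧ ∀ x ∈ I, ∀ y ∈ L, H.bracket x y ∈ I

/-- The α-annihilator of the set `S` inside the subalgebra `M`:
`Ann_M(S) = {x ∈ M | [x, α(y)] = 0 for all y ∈ S}`. -/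
def annIn (M : Submodule 𝔽 Q) (S : Set Q) : Set Q :=
  {x | x ∈ M ∧ ∀ y ∈ S, H.bracket x (H.alpha y) = 0}

/-- `I` is an essential Hom-ideal of `L`: it hits every nonzero Hom-ideal of `L`. -/
def IsEssentialIdealOf (L I : Submodule 𝔽 Q) : Prop :=
  H.IsIdealOf L I ∧ ∀ J : Submodule 𝔽 Q, H.IsIdealOf L J → J ≠ ⊥ → I ⊓ J ≠ ⊥

/-- The Hom-Lie algebra `L` is semiprime: `[I, α(I)] ≠ {0}` for every nonzero
Hom-ideal `I` of `L`. -/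
def IsSemiprimeOn (L : Submodule 𝔽 Q) : Prop :=
  ∀ I : Submodule 𝔽 Q, H.IsIdealOf L I → I ≠ ⊥ →
    ∃ x ∈ I, ∃ y ∈ I, H.bracket x (H.alpha y) ≠ 0

/-- The Hom-Lie algebra `L` is prime: `[I, α(J)] ≠ {0}` for all nonzero
Hom-ideals `I`, `J` of `L`. -/
def IsPrimeOn (L : Submodule 𝔽 Q) : Prop :=
  ∀ I J : Submodule 𝔽 Q, H.IsIdealOf L I → I ≠ ⊥ → H.IsIdealOf L J → J ≠ ⊥ →
    ∃ x ∈ I, ∃ y ∈ J, H.bracket x (H.alpha y) ≠ 0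

/-- The iterated brackets `[[…[[q,x₁],x₂],…],xₙ]` with `xᵢ ∈ L` (including `q` itself). -/
inductive IsWord (L : Submodule 𝔽 Q) (q : Q) : Q → Prop
  | base : IsWord L q q
  | step {p : Q} (x : Q) : IsWord L q p → x ∈ L → IsWord L q (H.bracket p x)

/-- `_L(q)`: the linear span in `Q` of `q` together with all the iterated brackets
`[[…[[q,x₁],x₂],…],xₙ]` with `xᵢ ∈ L`. -/
def wordSpan (L : Submodule 𝔽 Q) (q : Q) : Submodule 𝔽 Q :=
  Submodule.span 𝔽 {p | H.IsWord L q p}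

/-- `(L : q) = {x ∈ L | [x, α(_L(q))] ⊆ L}`, as a subspace of `Q`. -/
def quotIdeal (L : Submodule 𝔽 Q) (q : Q) : Submodule 𝔽 Q where
  carrier := {x | x ∈ L ∧ ∀ p ∈ H.wordSpan L q, H.bracket x (H.alpha p) ∈ L}
  add_mem' := by
    rintro a b ⟨haL, ha⟩ ⟨hbL, hb⟩
    refine ⟨L.add_mem haL hbL, fun p hp => ?_⟩
    rw [map_add, LinearMap.add_apply]
    exact L.add_mem (ha p hp) (hb p hp)
  zero_mem' := ⟨L.zero_mem, fun p _ => by simp⟩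
  smul_mem' := by
    rintro c a ⟨haL, ha⟩
    refine ⟨L.smul_mem c haL, fun p hp => ?_⟩
    rw [map_smul, LinearMap.smul_apply]
    exact L.smul_mem c (ha p hp)

/-- `Q` is an algebra of quotients of its Hom-subalgebra `L`: for all `p, q ∈ Q` with
`p ≠ 0` there is `x ∈ (L : q)` with `[x, α(p)] ≠ 0`. -/
def IsAlgebraOfQuotients (L : Submodule 𝔽 Q) : Prop :=
  ∀ p q : Q, p ≠ 0 → ∃ x ∈ H.quotIdeal L q, H.bracket x (H.alpha p) ≠ 0

/-- `Q` is a weak algebra of quotients of its Hom-subalgebra `L`: for every nonzero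
`q ∈ Q` there is `x ∈ L` with `0 ≠ [x, α(q)] ∈ L`. -/
def IsWeakAlgebraOfQuotients (L : Submodule 𝔽 Q) : Prop :=
  ∀ q : Q, q ≠ 0 → ∃ x ∈ L, H.bracket x (H.alpha q) ≠ 0 ∧ H.bracket x (H.alpha q) ∈ L

/-- `Q` is ideally absorbed into `L`: for every nonzero `q ∈ Q` there is a Hom-ideal `I`
of `L` with `Ann_L(I) = {0}` and `{0} ≠ [I, α(q)] ⊆ L`. -/
def IsIdeallyAbsorbed (L : Submodule 𝔽 Q) : Prop :=
  ∀ q : Q, q ≠ 0 → ∃ I : Submodule 𝔽 Q, H.IsIdealOf L I ∧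
    H.annIn L (I : Set Q) = {0} ∧
    (∃ y ∈ I, H.bracket y (H.alpha q) ≠ 0) ∧
    ∀ y ∈ I, H.bracket y (H.alpha q) ∈ (L : Set Q)

/-- The inner derivation `ad_q : p ↦ [α(q), p]`. -/
def ad (q : Q) : Module.End 𝔽 Q := H.bracket (H.alpha q)

end HomLieAlgebra

/-- `M(Q)`: the unital associative subalgebra of `End(Q)` generated by the identity
together with the inner derivations `ad_q`, `q ∈ Q`, viewed as a set. -/
def multAlg {𝔽 Q : Type*} [Field 𝔽] [AddCommGroup Q] [Module 𝔽 Q]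
    (H : HomLieAlgebra 𝔽 Q) : Set (Module.End 𝔽 Q) :=
  ↑(Algebra.adjoin 𝔽 (Set.range H.ad))

/-- `S^ann = {μ ∈ M(Q) | μ(S) = {0}}`. -/
def multAnn {𝔽 Q : Type*} [Field 𝔽] [AddCommGroup Q] [Module 𝔽 Q]
    (H : HomLieAlgebra 𝔽 Q) (S : Set Q) : Set (Module.End 𝔽 Q) :=
  {μ ∈ multAlg H | ∀ x ∈ S, μ x = 0}

/-- The extension `S ⊆ Q` is dense if `S^ann = {0}`. -/
def IsDenseExtension {𝔽 Q : Type*} [Field 𝔽] [AddCommGroup Q] [Module 𝔽 Q]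
    (H : HomLieAlgebra 𝔽 Q) (S : Set Q) : Prop :=
  multAnn H S = {0}

/-!
Let `μ ∈ M(Q)` kill `I`. For `y ∈ I` we have `[α(y), L] ⊆ I`, so `μ ad_y` kills `L` and vanishes by
density; as `μ ad_q (y) = -μ ad_y (q)`, right multiplication by `M(Q)` preserves the
annihilator of `I`, whence `μ ν ad_y = 0` for all `ν ∈ M(Q)`. Semiprimeness of `M(Q)` turns this
into `ad_y μ = 0`, i.e. `μ(Q) ⊆ Ann_Q(I)`. It remains to see `Ann_Q(I) = 0`. The same argument
applied to `μ = ad_t` shows that the ideal `Ann_L(I)` of `L` meets `I` trivially, so it is zero by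
essentiality, and the algebra-of-quotients property lifts this from `L` to `Q`.
-/

namespace HomLieAlgebra

variable {𝔽 : Type*} [Field 𝔽] {Q : Type*} [AddCommGroup Q] [Module 𝔽 Q]
variable (H : HomLieAlgebra 𝔽 Q)

lemma ad_apply (x y : Q) : H.ad x y = H.bracket (H.alpha x) y := rfl

lemma bracket_alpha_left (x y : Q) : H.bracket (H.alpha x) y = H.bracket x (H.alpha y) := by
  rw [← H.comm₁, H.comm₂]

lemma ad_comm (x y : Q) : H.ad x y = -H.ad y x := by
  rw [ad_apply, ad_apply, bracket_alpha_left, H.skew]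

variable {H}

lemma isSubalgebra_top : H.IsSubalgebra ⊤ :=
  ⟨fun _ _ ↦ trivial, fun _ _ _ _ ↦ trivial⟩

lemma isIdealOf_top : H.IsIdealOf ⊤ ⊤ :=
  ⟨le_rfl, fun _ _ ↦ trivial, fun _ _ _ _ ↦ trivial⟩

lemma IsIdealOf.ad_mem {L I : Submodule 𝔽 Q} (hI : H.IsIdealOf L I) {y x : Q} (hy : y ∈ I)
    (hx : x ∈ L) : H.ad y x ∈ I :=
  hI.2.2 _ (hI.2.1 y hy) x hx

lemma IsIdealOf.inf {L I J : Submodule 𝔽 Q} (hI : H.IsIdealOf L I) (hJ : H.IsIdealOf L J) :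
    H.IsIdealOf L (I ⊓ J) :=
  ⟨inf_le_left.trans hI.1, fun x hx ↦ ⟨hI.2.1 x hx.1, hJ.2.1 x hx.2⟩,
    fun x hx y hy ↦ ⟨hI.2.2 x hx.1 y hy, hJ.2.2 x hx.2 y hy⟩⟩

lemma IsAlgebraOfQuotients.isWeakAlgebraOfQuotients {L : Submodule 𝔽 Q}
    (hq : H.IsAlgebraOfQuotients L) : H.IsWeakAlgebraOfQuotients L := by
  intro q hq0
  obtain ⟨x, ⟨hxL, hx⟩, hxq⟩ := hq q q hq0
  exact ⟨x, hxL, hxq, hx q (Submodule.subset_span IsWord.base)⟩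

variable (H) in
def ann (M : Submodule 𝔽 Q) (S : Set Q) : Submodule 𝔽 Q where
  carrier := H.annIn M S
  add_mem' {a b} ha hb := ⟨M.add_mem ha.1 hb.1, fun y hy ↦ by simp [ha.2 y hy, hb.2 y hy]⟩
  zero_mem' := ⟨M.zero_mem, fun y _ ↦ by simp⟩
  smul_mem' c a ha := ⟨M.smul_mem c ha.1, fun y hy ↦ by simp [ha.2 y hy]⟩

lemma mem_ann {M : Submodule 𝔽 Q} {S : Set Q} {x : Q} :
    x ∈ H.ann M S ↔ x ∈ M ∧ ∀ y ∈ S, H.ad x y = 0 := by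
  show x ∈ M ∧ _ ↔ _
  simp only [ad_apply, bracket_alpha_left]

lemma IsIdealOf.bracket_mem_ann_top {L I : Submodule 𝔽 Q} (hI : H.IsIdealOf L I) {z x : Q}
    (hz : z ∈ H.ann ⊤ I) (hx : x ∈ L) : H.bracket z x ∈ H.ann ⊤ I := by
  rw [mem_ann] at hz ⊢
  refine ⟨trivial, fun y hy ↦ ?_⟩
  have hxy : H.ad z (H.bracket x y) = 0 := by
    rw [H.skew]
    simpa using hz.2 _ (I.neg_mem (hI.2.2 y hy x hx))
  have hyz : H.ad x (H.bracket y z) = 0 := by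
    rw [ad_apply, bracket_alpha_left, H.comm₁, ← ad_apply, ad_comm, hz.2 y hy, neg_zero, map_zero]
  have hJ := H.jacobi y z x
  simp only [← ad_apply] at hJ
  rw [hxy, hyz, add_zero, add_zero] at hJ
  rw [ad_comm, hJ, neg_zero]

lemma IsIdealOf.isIdealOf_ann {L I : Submodule 𝔽 Q} (hL : H.IsSubalgebra L)
    (hI : H.IsIdealOf L I) : H.IsIdealOf L (H.ann L I) := by
  have hann : ∀ {v}, v ∈ H.ann L I ↔ v ∈ L ∧ v ∈ H.ann ⊤ I := by
    simp [mem_ann]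
  refine ⟨fun v hv ↦ (mem_ann.mp hv).1, fun v hv ↦ ?_, fun v hv x hx ↦ ?_⟩
  · rw [mem_ann] at hv ⊢
    refine ⟨hL.1 v hv.1, fun y hy ↦ ?_⟩
    rw [ad_apply, ← H.comm₁, ← ad_apply, hv.2 y hy, map_zero]
  · rw [hann] at hv ⊢
    exact ⟨hL.2 v hv.1 x hx, hI.bracket_mem_ann_top hv.2 hx⟩

lemma IsIdealOf.ann_inf_eq_bot {L I : Submodule 𝔽 Q} (hL : H.IsSubalgebra L)
    (hsp : H.IsSemiprimeOn L) (hI : H.IsIdealOf L I) : H.ann L I ⊓ I = ⊥ := by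
  by_contra hne
  obtain ⟨x, hx, y, hy, hxy⟩ := hsp _ ((hI.isIdealOf_ann hL).inf hI) hne
  rw [← bracket_alpha_left, ← ad_apply] at hxy
  exact hxy ((mem_ann.mp hx.1).2 y hy.2)

lemma eq_zero_of_ad_eq_zero (hsp : H.IsSemiprimeOn ⊤) {t : Q} (ht : H.ad t = 0) : t = 0 := by
  have hmem : t ∈ H.ann ⊤ (⊤ : Submodule 𝔽 Q) ⊓ ⊤ :=
    ⟨mem_ann.mpr ⟨trivial, fun y _ ↦ by rw [ht, LinearMap.zero_apply]⟩, trivial⟩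
  rwa [isIdealOf_top.ann_inf_eq_bot isSubalgebra_top hsp, Submodule.mem_bot] at hmem

/-- `Ann_Q(I) = 0` as soon as `Ann_L(I) = 0`: a nonzero `z ∈ Ann_Q(I)` would be moved by some
`ad_x`, `x ∈ L`, to a nonzero element of `L ∩ Ann_Q(I)`. -/
lemma IsIdealOf.ann_top_eq_bot {L I : Submodule 𝔽 Q} (hL : H.IsSubalgebra L)
    (hweak : H.IsWeakAlgebraOfQuotients L) (hI : H.IsIdealOf L I) (h : H.ann L I = ⊥) :
    H.ann ⊤ I = ⊥ := by
  refine (Submodule.eq_bot_iff _).mpr fun z hz ↦ by_contra fun hz0 ↦ ?_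
  obtain ⟨x, hxL, hne, hmemL⟩ := hweak z hz0
  have hxz : H.bracket x (H.alpha z) ∈ H.ann ⊤ I := by
    rw [← bracket_alpha_left, H.skew]
    exact Submodule.neg_mem _ (hI.bracket_mem_ann_top hz (hL.1 x hxL))
  have hmem : H.bracket x (H.alpha z) ∈ H.ann L I :=
    mem_ann.mpr ⟨hmemL, (mem_ann.mp hxz).2⟩
  rw [h, Submodule.mem_bot] at hmem
  exact hne hmem

lemma ad_mem_multAlg (q : Q) : H.ad q ∈ multAlg H :=
  Algebra.subset_adjoin ⟨q, rfl⟩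

lemma mul_mem_multAlg {μ ν : Module.End 𝔽 Q} (hμ : μ ∈ multAlg H) (hν : ν ∈ multAlg H) :
    μ * ν ∈ multAlg H :=
  Subalgebra.mul_mem _ hμ hν

section DenseExtension

variable {L I : Submodule 𝔽 Q} (hdense : IsDenseExtension H (L : Set Q))
  (hI : H.IsIdealOf L I)
include hdense hI

lemma mul_ad_eq_zero {μ : Module.End 𝔽 Q} (hμ : μ ∈ multAnn H I) {y : Q} (hy : y ∈ I) :
    μ * H.ad y = 0 := by
  have hmem : μ * H.ad y ∈ multAnn H L :=
    ⟨mul_mem_multAlg hμ.1 (ad_mem_multAlg y), fun x hx ↦ hμ.2 _ (hI.ad_mem hy hx)⟩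
  rwa [hdense] at hmem

lemma mul_ad_mem_multAnn {μ : Module.End 𝔽 Q} (hμ : μ ∈ multAnn H I) (q : Q) :
    μ * H.ad q ∈ multAnn H I := by
  refine ⟨mul_mem_multAlg hμ.1 (ad_mem_multAlg q), fun y hy ↦ ?_⟩
  rw [Module.End.mul_apply, ad_comm, map_neg, ← Module.End.mul_apply,
    mul_ad_eq_zero hdense hI hμ hy, LinearMap.zero_apply, neg_zero]

lemma mul_mem_multAnn {μ ν : Module.End 𝔽 Q} (hμ : μ ∈ multAnn H I) (hν : ν ∈ multAlg H) :
    μ * ν ∈ multAnn H I := by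
  induction hν using Algebra.adjoin_induction generalizing μ with
  | mem _ hx =>
    obtain ⟨q, rfl⟩ := hx
    exact mul_ad_mem_multAnn hdense hI hμ q
  | algebraMap c =>
    refine ⟨mul_mem_multAlg hμ.1 (Subalgebra.algebraMap_mem _ c), fun y hy ↦ ?_⟩
    simp [Module.algebraMap_end_apply, hμ.2 y hy]
  | add _ _ _ _ h₁ h₂ =>
    rw [mul_add]
    exact ⟨Subalgebra.add_mem _ (h₁ hμ).1 (h₂ hμ).1,
      fun y hy ↦ by simp [(h₁ hμ).2 y hy, (h₂ hμ).2 y hy]⟩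
  | mul _ _ _ _ h₁ h₂ =>
    rw [← mul_assoc]
    exact h₂ (h₁ hμ)

lemma mul_mul_ad_eq_zero {μ ν : Module.End 𝔽 Q} (hμ : μ ∈ multAnn H I) (hν : ν ∈ multAlg H)
    {y : Q} (hy : y ∈ I) : μ * ν * H.ad y = 0 :=
  mul_ad_eq_zero hdense hI (mul_mem_multAnn hdense hI hμ hν) hy

variable (hspM : ∀ μ ∈ multAlg H, (∀ ν ∈ multAlg H, μ * ν * μ = 0) → μ = 0)
include hspM

lemma ad_mul_eq_zero {μ : Module.End 𝔽 Q} (hμ : μ ∈ multAnn H I) {y : Q} (hy : y ∈ I) :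
    H.ad y * μ = 0 := by
  refine hspM _ (mul_mem_multAlg (ad_mem_multAlg y) hμ.1) fun ν hν ↦ ?_
  calc H.ad y * μ * ν * (H.ad y * μ) = H.ad y * (μ * ν * H.ad y) * μ := by noncomm_ring
    _ = 0 := by rw [mul_mul_ad_eq_zero hdense hI hμ hν hy, mul_zero, zero_mul]

lemma ann_inf_eq_bot_of_dense (hspQ : H.IsSemiprimeOn ⊤) : H.ann L I ⊓ I = ⊥ := by
  refine (Submodule.eq_bot_iff _).mpr fun t ⟨htA, htI⟩ ↦ eq_zero_of_ad_eq_zero hspQ ?_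
  have had : H.ad t ∈ multAnn H I := ⟨ad_mem_multAlg t, (mem_ann.mp htA).2⟩
  exact hspM _ (ad_mem_multAlg t) fun ν hν ↦ mul_mul_ad_eq_zero hdense hI had hν htI

end DenseExtension

end HomLieAlgebra

/-- If `L ⊆ Q` is a dense extension of Hom-Lie algebras, `Q` is multiplicatively
semiprime (`Q` semiprime and `M(Q)` semiprime) and `Q` is an algebra of quotients of
`L`, then `I ⊆ Q` is a dense extension for every essential Hom-ideal `I` of `L`. -/
theorem dense_of_essential_ideal
    {𝔽 Q : Type*} [Field 𝔽] [AddCommGroup Q] [Module 𝔽 Q]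
    (H : HomLieAlgebra 𝔽 Q) (L : Submodule 𝔽 Q) (hL : H.IsSubalgebra L)
    (hdense : IsDenseExtension H (L : Set Q))
    (hspQ : H.IsSemiprimeOn ⊤)
    (hspM : ∀ μ ∈ multAlg H, (∀ ν ∈ multAlg H, μ * ν * μ = 0) → μ = 0)
    (hq : H.IsAlgebraOfQuotients L) :
    ∀ I : Submodule 𝔽 Q, H.IsEssentialIdealOf L I → IsDenseExtension H (I : Set Q) := by
  rintro I ⟨hI, hEss⟩
  have hannL : H.ann L I = ⊥ := by
    by_contra hne
    exact hEss _ (hI.isIdealOf_ann hL) hne (by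
      rw [inf_comm, HomLieAlgebra.ann_inf_eq_bot_of_dense hdense hI hspM hspQ])
  have hannQ := hI.ann_top_eq_bot hL hq.isWeakAlgebraOfQuotients hannL
  refine Set.eq_singleton_iff_unique_mem.mpr ⟨⟨Subalgebra.zero_mem _, fun _ _ ↦ rfl⟩, ?_⟩
  intro μ hμ
  ext p
  have hμp : μ p ∈ H.ann ⊤ I := by
    refine HomLieAlgebra.mem_ann.mpr ⟨trivial, fun y hy ↦ ?_⟩
    rw [H.ad_comm, ← Module.End.mul_apply, HomLieAlgebra.ad_mul_eq_zero hdense hI hspM hμ hy,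
      LinearMap.zero_apply, neg_zero]
  rwa [hannQ, Submodule.mem_bot] at hμp
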